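/- arXiv:1805.09397 — 2 statements merged into one kernel-verified Lean document; each statement's English description precedes it below -/
import Mathlib

section
/- In the dynamic structural model under Assumptions C and SX, fix t and (z^{t−1}, x^{t−1}, d^{t−1}, y^{t−1}) such that the conditioning events below have positive probability, and fix two instrument values z_t, z̃_t. If Pr[D_t = 1 | Z^t = (z^{t−1}, z_t), X^{t−1} = x^{t−1}, D^{t−1} = d^{t−1}, Y^{t−1} = y^{t−1}] > Pr[D_t = 1 | Z^t = (z^{t−1}, z̃_t), X^{t−1} = x^{t−1}, D^{t−1} = d^{t−1}, Y^{t−1} = y^{t−1}], then π_t(y^{t−1}, d^{t−1}, z_t) > π_t(y^{t−1}, d^{t−1}, z̃_t). -/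
/-!
Along the history, each `(D_s, Y_s)` is a threshold crossing of `(V_s, U_s(d_s))` with thresholds
fixed by the history, so the conditioning event factors as an event in `(Z, X)` intersected with
an event in `(U(d), V)`, and on it `D_t = 1` exactly when `V_t ≤ π_t(y^{t−1}, d^{t−1}, z_t)`.
By independence the `(Z, X)` factor cancels from the propensity score, which becomes the
probability of `{V_t ≤ π_t(…, z_t)}` given the unobservable part of the history: a monotone
function of `π_t(…, z_t)`.
-/

open MeasureTheory ProbabilityTheory
open scoped ENNReal

structure DynModel (T : ℕ) (Ω : Type) [MeasurableSpace Ω] where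
  P : Measure Ω
  probP : IsProbabilityMeasure P
  μf : (t : ℕ) → (Fin t → Bool) → (Fin (t + 1) → Bool) → ℝ → ℝ
  πf : (t : ℕ) → (Fin t → Bool) → (Fin t → Bool) → ℝ → ℝ
  X : ℕ → Ω → ℝ
  Z : ℕ → Ω → ℝ
  U : ℕ → Bool → Ω → ℝ
  V : ℕ → Ω → ℝ
  Y : ℕ → Ω → Bool
  D : ℕ → Ω → Bool
  measX : ∀ t, Measurable (X t)
  measZ : ∀ t, Measurable (Z t)
  measU : ∀ t b, Measurable (U t b)
  measV : ∀ t, Measurable (V t)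
  measY : ∀ t, Measurable (Y t)
  measD : ∀ t, Measurable (D t)
  eqY : ∀ t < T, ∀ ω, Y t ω =
    decide (U t (D t ω) ω ≤ μf t (fun s : Fin t => Y s ω) (fun s : Fin (t + 1) => D s ω) (X t ω))
  eqD : ∀ t < T, ∀ ω, D t ω =
    decide (V t ω ≤ πf t (fun s : Fin t => Y s ω) (fun s : Fin t => D s ω) (Z t ω))

namespace DynModel

variable {T : ℕ} {Ω : Type} [MeasurableSpace Ω]

/-- Potential outcome `Y_t(d^t)` defined recursively. -/
noncomputable def PY (M : DynModel T Ω) (d : ℕ → Bool) (t : ℕ) (ω : Ω) : Bool :=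
  decide (M.U t (d t) ω ≤
    M.μf t (fun s : Fin t => M.PY d s ω) (fun s : Fin (t + 1) => d s) (M.X t ω))
termination_by t
decreasing_by all_goals exact s.isLt

end DynModel

open DynModel

/-- Assumption C: for each regime `d`, the vector `(U(d), V)` has a strictly positive density
with respect to Lebesgue measure on `ℝ^{2T}`. -/
def AssmC {T : ℕ} {Ω : Type} [MeasurableSpace Ω] (M : DynModel T Ω) : Prop :=
  ∀ d : ℕ → Bool,
    ∃ f : (Fin T → ℝ) × (Fin T → ℝ) → ℝ≥0∞,
      (∀ p, 0 < f p) ∧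
      Measure.map
        (fun ω => ((fun s : Fin T => M.U s (d s) ω), (fun s : Fin T => M.V s ω))) M.P
        = volume.withDensity f

/-- Assumption SX: `(Z, X)` is independent of `(U(d), V)` for every regime `d`. -/
def AssmSX {T : ℕ} {Ω : Type} [MeasurableSpace Ω] (M : DynModel T Ω) : Prop :=
  ∀ d : ℕ → Bool,
    IndepFun
      (fun ω => ((fun s : Fin T => M.Z s ω), (fun s : Fin T => M.X s ω)))
      (fun ω => ((fun s : Fin T => M.U s (d s) ω), (fun s : Fin T => M.V s ω)))
      M.P

/-- The conditioning event `{Z^{t−1} = z^{t−1}, Z_t = z_t, X^{t−1} = x^{t−1},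
D^{t−1} = d^{t−1}, Y^{t−1} = y^{t−1}}`. -/
def histEvent {T : ℕ} {Ω : Type} [MeasurableSpace Ω] (M : DynModel T Ω) (t : ℕ)
    (zh xh : Fin t → ℝ) (dh yh : Fin t → Bool) (zt : ℝ) : Set Ω :=
  {ω | (∀ s : Fin t, M.Z s ω = zh s ∧ M.X s ω = xh s ∧ M.D s ω = dh s ∧ M.Y s ω = yh s) ∧
    M.Z t ω = zt}

theorem forall_iff_forall_of_forall_lt_imp_iff {α : Type*} [LT α] [WellFoundedLT α]
    {p q : α → Prop} (h : ∀ a, (∀ b < a, p b) → (p a ↔ q a)) :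
    (∀ a, p a) ↔ ∀ a, q a :=
  ⟨fun hp a => (h a fun b _ => hp b).mp (hp a),
    fun hq a => WellFoundedLT.induction a fun a ih => (h a ih).mpr (hq a)⟩

theorem measurable_decide_le {α : Type*} [TopologicalSpace α] [MeasurableSpace α]
    [OpensMeasurableSpace α] [LinearOrder α] [ClosedIicTopology α] (c : α) :
    Measurable fun x : α => decide (x ≤ c) := by
  refine measurable_to_bool ?_
  convert measurableSet_Iic (a := c)
  ext
  simp

section CondIndep

variable {Ω α β : Type*} [MeasurableSpace Ω] [MeasurableSpace α] [MeasurableSpace β]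
  {μ : Measure Ω} {f : Ω → α} {g : Ω → β} {S : Set α} {R R' : Set β}

theorem ProbabilityTheory.IndepFun.cond_preimage_inter_preimage [IsFiniteMeasure μ]
    (hfg : IndepFun f g μ) (hg : Measurable g) (hS : MeasurableSet S) (hR : MeasurableSet R)
    (hR' : MeasurableSet R') (hS₀ : μ (f ⁻¹' S) ≠ 0) :
    μ[g ⁻¹' R' | f ⁻¹' S ∩ g ⁻¹' R] = μ[g ⁻¹' R' | g ⁻¹' R] := by
  rw [cond_apply' (hg hR'), cond_apply' (hg hR'), Set.inter_assoc, ← Set.preimage_inter,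
    hfg.measure_inter_preimage_eq_mul _ _ hS hR,
    hfg.measure_inter_preimage_eq_mul _ _ hS (hR.inter hR'),
    ENNReal.mul_inv (Or.inl hS₀) (Or.inl (measure_ne_top _ _)), mul_mul_mul_comm,
    ENNReal.inv_mul_cancel hS₀ (measure_ne_top _ _), one_mul]

theorem ProbabilityTheory.IndepFun.cond_preimage_inter_preimage_le [IsFiniteMeasure μ]
    (hfg : IndepFun f g μ) (hg : Measurable g) (hS : MeasurableSet S) (hR : MeasurableSet R)
    (hR' : MeasurableSet R') :
    μ[g ⁻¹' R' | f ⁻¹' S ∩ g ⁻¹' R] ≤ μ[g ⁻¹' R' | g ⁻¹' R] := by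
  by_cases hS₀ : μ (f ⁻¹' S) = 0
  · rw [cond_eq_zero_of_meas_eq_zero (measure_mono_null Set.inter_subset_left hS₀)]
    exact bot_le
  · exact (hfg.cond_preimage_inter_preimage hg hS hR hR' hS₀).le

end CondIndep

namespace DynModel

variable {T : ℕ} {Ω : Type} [MeasurableSpace Ω] (M : DynModel T Ω)

instance : IsProbabilityMeasure M.P := M.probP

def exogenous (ω : Ω) : (Fin T → ℝ) × (Fin T → ℝ) :=
  (fun s : Fin T => M.Z s ω, fun s : Fin T => M.X s ω)

def unobservables (d : ℕ → Bool) (ω : Ω) : (Fin T → ℝ) × (Fin T → ℝ) :=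
  (fun s : Fin T => M.U s (d s) ω, fun s : Fin T => M.V s ω)

theorem measurable_unobservables (d : ℕ → Bool) : Measurable (M.unobservables d) :=
  (measurable_pi_lambda _ fun s : Fin T => M.measU s _).prodMk
    (measurable_pi_lambda _ fun s : Fin T => M.measV s)

/-- Extends `d^{t−1}` to a regime; the values from time `t` on are irrelevant. -/
def histRegime {t : ℕ} (dh : Fin t → Bool) (s : ℕ) : Bool :=
  if h : s < t then dh ⟨s, h⟩ else false

@[simp]
theorem histRegime_val {t : ℕ} (dh : Fin t → Bool) (s : Fin t) : histRegime dh s = dh s := by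
  simp [histRegime]

variable {t : ℕ} (zh xh : Fin t → ℝ) (dh yh : Fin t → Bool)

/-- `π_s(y^{s−1}, d^{s−1}, z_s)` along the history. -/
def treatmentThreshold (s : Fin t) : ℝ :=
  M.πf s (yh ∘ Fin.castLE s.isLt.le) (dh ∘ Fin.castLE s.isLt.le) (zh s)

/-- `μ_s(y^{s−1}, d^s, x_s)` along the history. -/
def outcomeThreshold (s : Fin t) : ℝ :=
  M.μf s (yh ∘ Fin.castLE s.isLt.le) (dh ∘ Fin.castLE (Nat.succ_le_of_lt s.isLt)) (xh s)

/-- The treatment and outcome history that `(U(d), V) = p` produces when every threshold is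
evaluated along the given history. -/
noncomputable def thresholdHist (ht : t ≤ T) (p : (Fin T → ℝ) × (Fin T → ℝ)) :
    (Fin t → Bool) × (Fin t → Bool) :=
  (fun s => decide (p.2 (Fin.castLE ht s) ≤ M.treatmentThreshold zh dh yh s),
    fun s => decide (p.1 (Fin.castLE ht s) ≤ M.outcomeThreshold xh dh yh s))

theorem measurable_thresholdHist (ht : t ≤ T) :
    Measurable (M.thresholdHist zh xh dh yh ht) := by
  refine (measurable_pi_lambda _ fun s => (measurable_decide_le _).comp ?_).prodMk
    (measurable_pi_lambda _ fun s => (measurable_decide_le _).comp ?_) <;> fun_prop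

def exogenousHist (ht : t < T) (q : (Fin T → ℝ) × (Fin T → ℝ)) :
    (Fin t → ℝ) × (Fin t → ℝ) × ℝ :=
  (fun s => q.1 (Fin.castLE ht.le s), fun s => q.2 (Fin.castLE ht.le s), q.1 ⟨t, ht⟩)

theorem measurable_exogenousHist (ht : t < T) : Measurable (exogenousHist (t := t) ht) := by
  unfold exogenousHist
  fun_prop

/-- `Pr[V_t ≤ c | (U(d), V) produces the history (d^{t−1}, y^{t−1})]`. -/
noncomputable def latentPropensity (ht : t < T) (c : ℝ) : ℝ≥0∞ :=
  M.P[M.unobservables (histRegime dh) ⁻¹' {p | p.2 ⟨t, ht⟩ ≤ c} |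
    M.unobservables (histRegime dh) ⁻¹' (M.thresholdHist zh xh dh yh ht.le ⁻¹' {(dh, yh)})]

theorem monotone_latentPropensity (ht : t < T) :
    Monotone (M.latentPropensity zh xh dh yh ht) :=
  fun _ _ hc => measure_mono (Set.preimage_mono fun _ hp => le_trans hp hc)

variable {M zh xh dh yh}

theorem treatment_outcome_eq_iff (ht : t < T) {ω : Ω} (s : Fin t) (hz : M.Z s ω = zh s)
    (hx : M.X s ω = xh s) (hpast : ∀ r < s, M.D r ω = dh r ∧ M.Y r ω = yh r) :
    (M.D s ω = dh s ∧ M.Y s ω = yh s) ↔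
      (decide (M.V s ω ≤ M.treatmentThreshold zh dh yh s) = dh s ∧
        decide (M.U s (dh s) ω ≤ M.outcomeThreshold xh dh yh s) = yh s) := by
  have hsT : (s : ℕ) < T := s.isLt.trans ht
  have hY : (fun r : Fin s => M.Y r ω) = yh ∘ Fin.castLE s.isLt.le :=
    funext fun r => (hpast (Fin.castLE _ r) r.isLt).2
  have hD : (fun r : Fin s => M.D r ω) = dh ∘ Fin.castLE s.isLt.le :=
    funext fun r => (hpast (Fin.castLE _ r) r.isLt).1
  have hDs : M.D s ω = decide (M.V s ω ≤ M.treatmentThreshold zh dh yh s) := by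
    rw [M.eqD s hsT, hY, hD, hz]
    rfl
  have hYs (hds : M.D s ω = dh s) :
      M.Y s ω = decide (M.U s (dh s) ω ≤ M.outcomeThreshold xh dh yh s) := by
    have hD' : (fun r : Fin (s + 1) => M.D r ω) =
        dh ∘ Fin.castLE (Nat.succ_le_of_lt s.isLt) := by
      funext r
      rcases Nat.lt_succ_iff_lt_or_eq.mp r.isLt with hr | hr
      · exact (hpast (Fin.castLE _ r) hr).1
      · have hrs : Fin.castLE (Nat.succ_le_of_lt s.isLt) r = s := Fin.ext hr
        rw [Function.comp_apply, hrs, ← hds, hr]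
    rw [M.eqY s hsT, hds, hY, hD', hx]
    rfl
  rw [← hDs]
  exact and_congr_right fun hds => by rw [hYs hds]

theorem thresholdHist_unobservables_eq_iff (ht : t ≤ T) (ω : Ω) :
    M.thresholdHist zh xh dh yh ht (M.unobservables (histRegime dh) ω) = (dh, yh) ↔
      ∀ s : Fin t, decide (M.V s ω ≤ M.treatmentThreshold zh dh yh s) = dh s ∧
        decide (M.U s (dh s) ω ≤ M.outcomeThreshold xh dh yh s) = yh s := by
  simp only [thresholdHist, unobservables, Prod.mk.injEq, funext_iff, Fin.val_castLE,
    histRegime_val, forall_and]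
  exact Iff.rfl

theorem hist_eq_iff_thresholdHist_eq (ht : t < T) {ω : Ω}
    (hzx : ∀ s : Fin t, M.Z s ω = zh s ∧ M.X s ω = xh s) :
    (∀ s : Fin t, M.D s ω = dh s ∧ M.Y s ω = yh s) ↔
      M.thresholdHist zh xh dh yh ht.le (M.unobservables (histRegime dh) ω) = (dh, yh) := by
  rw [thresholdHist_unobservables_eq_iff]
  exact forall_iff_forall_of_forall_lt_imp_iff fun s hpast =>
    treatment_outcome_eq_iff ht s (hzx s).1 (hzx s).2 hpast

theorem histEvent_eq_preimage_inter_preimage (ht : t < T) (z : ℝ) :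
    histEvent M t zh xh dh yh z =
      M.exogenous ⁻¹' (exogenousHist ht ⁻¹' {(zh, xh, z)}) ∩
        M.unobservables (histRegime dh) ⁻¹'
          (M.thresholdHist zh xh dh yh ht.le ⁻¹' {(dh, yh)}) := by
  ext ω
  have hexo : exogenousHist ht (M.exogenous ω) = (zh, xh, z) ↔
      (∀ s : Fin t, M.Z s ω = zh s ∧ M.X s ω = xh s) ∧ M.Z t ω = z := by
    simp [exogenousHist, exogenous, funext_iff, forall_and, and_assoc]
  simp only [histEvent, Set.mem_ofPred_eq, Set.mem_inter_iff, Set.mem_preimage,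
    Set.mem_singleton_iff, hexo]
  constructor
  · rintro ⟨h, hzt⟩
    have hzx (s : Fin t) : M.Z s ω = zh s ∧ M.X s ω = xh s := ⟨(h s).1, (h s).2.1⟩
    exact ⟨⟨hzx, hzt⟩, (hist_eq_iff_thresholdHist_eq ht hzx).mp fun s => (h s).2.2⟩
  · rintro ⟨⟨hzx, hzt⟩, hcross⟩
    have hDY := (hist_eq_iff_thresholdHist_eq ht hzx).mpr hcross
    exact ⟨fun s => ⟨(hzx s).1, (hzx s).2, hDY s⟩, hzt⟩

theorem histEvent_inter_treated (ht : t < T) (z : ℝ) (d : ℕ → Bool) :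
    histEvent M t zh xh dh yh z ∩ {ω | M.D t ω = true} =
      histEvent M t zh xh dh yh z ∩
        M.unobservables d ⁻¹' {p | p.2 ⟨t, ht⟩ ≤ M.πf t yh dh z} := by
  ext ω
  refine and_congr_right fun hω => ?_
  have hY : (fun s : Fin t => M.Y s ω) = yh := funext fun s => (hω.1 s).2.2.2
  have hD : (fun s : Fin t => M.D s ω) = dh := funext fun s => (hω.1 s).2.2.1
  simp [M.eqD t ht ω, hY, hD, hω.2, unobservables]

theorem measurableSet_treated (ht : t < T) (c : ℝ) :
    MeasurableSet {p : (Fin T → ℝ) × (Fin T → ℝ) | p.2 ⟨t, ht⟩ ≤ c} :=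
  measurableSet_le (by fun_prop) measurable_const

theorem cond_treated_histEvent (ht : t < T) (z : ℝ) :
    M.P[{ω | M.D t ω = true} | histEvent M t zh xh dh yh z] =
      M.P[M.unobservables (histRegime dh) ⁻¹' {p | p.2 ⟨t, ht⟩ ≤ M.πf t yh dh z} |
        M.exogenous ⁻¹' (exogenousHist ht ⁻¹' {(zh, xh, z)}) ∩
          M.unobservables (histRegime dh) ⁻¹'
            (M.thresholdHist zh xh dh yh ht.le ⁻¹' {(dh, yh)})] := by
  rw [cond_apply' (measurableSet_eq_fun (M.measD t) measurable_const),
    histEvent_inter_treated ht z (histRegime dh),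
    ← cond_apply' (M.measurable_unobservables _ (measurableSet_treated ht _)),
    histEvent_eq_preimage_inter_preimage ht]

theorem cond_treated_histEvent_le (hSX : AssmSX M) (ht : t < T) (z : ℝ) :
    M.P[{ω | M.D t ω = true} | histEvent M t zh xh dh yh z] ≤
      M.latentPropensity zh xh dh yh ht (M.πf t yh dh z) := by
  rw [cond_treated_histEvent ht]
  exact (hSX _).cond_preimage_inter_preimage_le (M.measurable_unobservables _)
    (measurable_exogenousHist ht (measurableSet_singleton _))
    (M.measurable_thresholdHist zh xh dh yh ht.le (measurableSet_singleton _))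
    (measurableSet_treated ht _)

theorem cond_treated_histEvent_eq (hSX : AssmSX M) (ht : t < T) (z : ℝ)
    (hpos : 0 < M.P (histEvent M t zh xh dh yh z)) :
    M.P[{ω | M.D t ω = true} | histEvent M t zh xh dh yh z] =
      M.latentPropensity zh xh dh yh ht (M.πf t yh dh z) := by
  have hexo : M.P (M.exogenous ⁻¹' (exogenousHist ht ⁻¹' {(zh, xh, z)})) ≠ 0 := by
    refine (measure_mono ?_ |>.trans_lt' hpos).ne'
    rw [histEvent_eq_preimage_inter_preimage ht]
    exact Set.inter_subset_left
  rw [cond_treated_histEvent ht]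
  exact (hSX _).cond_preimage_inter_preimage (M.measurable_unobservables _)
    (measurable_exogenousHist ht (measurableSet_singleton _))
    (M.measurable_thresholdHist zh xh dh yh ht.le (measurableSet_singleton _))
    (measurableSet_treated ht _) hexo

end DynModel

theorem statement3_general {T : ℕ} {Ω : Type} [MeasurableSpace Ω]
    (M : DynModel T Ω) (hSX : AssmSX M)
    (t : ℕ) (ht : t < T) (zh xh : Fin t → ℝ) (dh yh : Fin t → Bool) (zt zt' : ℝ)
    (hpos' : 0 < M.P (histEvent M t zh xh dh yh zt'))
    (hgt : ProbabilityTheory.cond M.P (histEvent M t zh xh dh yh zt) {ω | M.D t ω = true}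
        > ProbabilityTheory.cond M.P (histEvent M t zh xh dh yh zt') {ω | M.D t ω = true}) :
    M.πf t yh dh zt > M.πf t yh dh zt' := by
  by_contra! hle
  refine hgt.not_ge ?_
  calc M.P[{ω | M.D t ω = true} | histEvent M t zh xh dh yh zt]
      ≤ M.latentPropensity zh xh dh yh ht (M.πf t yh dh zt) :=
        cond_treated_histEvent_le hSX ht zt
    _ ≤ M.latentPropensity zh xh dh yh ht (M.πf t yh dh zt') :=
        M.monotone_latentPropensity zh xh dh yh ht hle
    _ = M.P[{ω | M.D t ω = true} | histEvent M t zh xh dh yh zt'] :=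
        (cond_treated_histEvent_eq hSX ht zt' hpos').symm

/-- if the propensity of treatment is strictly larger at `z_t` than at `z̃_t`
(conditional on the same history), then `π_t(y^{t−1}, d^{t−1}, z_t) > π_t(y^{t−1}, d^{t−1}, z̃_t)`. -/
theorem statement3 {T : ℕ} {Ω : Type} [MeasurableSpace Ω]
    (M : DynModel T Ω) (hC : AssmC M) (hSX : AssmSX M)
    (t : ℕ) (ht : t < T) (zh xh : Fin t → ℝ) (dh yh : Fin t → Bool) (zt zt' : ℝ)
    (hpos : 0 < M.P (histEvent M t zh xh dh yh zt))
    (hpos' : 0 < M.P (histEvent M t zh xh dh yh zt'))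
    (hgt : ProbabilityTheory.cond M.P (histEvent M t zh xh dh yh zt) {ω | M.D t ω = true}
        > ProbabilityTheory.cond M.P (histEvent M t zh xh dh yh zt') {ω | M.D t ω = true}) :
    M.πf t yh dh zt > M.πf t yh dh zt' :=
  statement3_general M hSX t ht zh xh dh yh zt zt' hpos' hgt
end

section
/- In the dynamic structural model under Assumptions C and SX, fix t ≥ 2 and (z^{t−1}, x^{t−1}, d^{t−1}, y^{t−1}) with positive conditioning probability; write π_t := π_t(y^{t−1}, d^{t−1}, z_t) and π̃_t := π_t(y^{t−1}, d^{t−1}, z̃_t) and assume π̃_t ≤ π_t. Then h_t(z_t, z̃_t, x_t, x̃_t; z^{t−1}, x^{t−1}, d^{t−1}, y^{t−1}) = Pr[U_t(1) ≤ μ_t(y^{t−1}, d^{t−1}, 1, x_t) and π̃_t ≤ V_t ≤ π_t | A] − Pr[U_t(0) ≤ μ_t(y^{t−1}, d^{t−1}, 0, x̃_t) and π̃_t ≤ V_t ≤ π_t | A], where A is the event {Z^{t−1} = z^{t−1}, X^{t−1} = x^{t−1}, V^{t−1} ∈ 𝒱^{t−1}(d^{t−1}, U^{t−2}(d^{t−2});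 z^{t−1}, x^{t−2}), U^{t−1}(d^{t−1}) ∈ 𝒰^{t−1}(d^{t−1}, y^{t−1}; x^{t−1})}. -/
open MeasureTheory ProbabilityTheory
open scoped ENNReal

namespace DynModel

variable {T : ℕ} {Ω : Type} [MeasurableSpace Ω]

/-- The deterministic outcome path `y_t(u; d, x)` generated by the structural functions from
unobservables `u`, regime `d` and exogenous path `x`. -/
noncomputable def ydet (M : DynModel T Ω) (u : ℕ → ℝ) (d : ℕ → Bool) (x : ℕ → ℝ) (t : ℕ) :
    Bool :=
  decide (u t ≤ M.μf t (fun s : Fin t => M.ydet u d x s) (fun s : Fin (t + 1) => d s) (x t))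
termination_by t
decreasing_by all_goals exact s.isLt

end DynModel

open DynModel

/-- The conditioning event `{Z^{t−1} = z^{t−1}, Z_t = z_t, X^{t−1} = x^{t−1}, X_t = x_t,
D^{t−1} = d^{t−1}, Y^{t−1} = y^{t−1}}`. -/
def fullHistEvent {T : ℕ} {Ω : Type} [MeasurableSpace Ω] (M : DynModel T Ω) (t : ℕ)
    (zh xh : Fin t → ℝ) (dh yh : Fin t → Bool) (zt xt : ℝ) : Set Ω :=
  {ω | (∀ s : Fin t, M.Z s ω = zh s ∧ M.X s ω = xh s ∧ M.D s ω = dh s ∧ M.Y s ω = yh s) ∧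
    M.Z t ω = zt ∧ M.X t ω = xt}

/-!
Fix the exogenous history. On that event the observed history `(D^t, Y^t) = (dh, yh)` coincides
with the event that the unobservables reproduce it (`unobsHistEvent`, the paper's `𝒰`/`𝒱`-sets),
which depends only on `(U(d), V)` for any regime `d` extending `dh`. With `d = update de t b`, the
period-`t` event `{Y_t = 1, D_t = b}` is in addition an event in `(U_t(b), V_t)`, so by SX the extra
conditioning on `(Z, X)` drops out: every probability in `h_t`, and both on the right-hand side, is
a probability conditional on `unobsHistEvent`. The `z_t`- and `z̃_t`-terms of `h_t` then differ by
the band `π̃_t < V_t ≤ π_t`, whose endpoint `V_t = π̃_t` is null by Assumption C.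
-/

namespace ProbabilityTheory

variable {Ω β γ : Type*} {mΩ : MeasurableSpace Ω} {μ : Measure Ω}

theorem cond_congr_of_inter_eq {s t t' : Set Ω} (hs : MeasurableSet s) (h : s ∩ t = s ∩ t') :
    μ[t | s] = μ[t' | s] := by
  rw [← cond_inter_self hs, h, cond_inter_self hs]

theorem IndepFun.cond_inter_eq_cond [IsFiniteMeasure μ] {mβ : MeasurableSpace β}
    {mγ : MeasurableSpace γ} {f : Ω → β} {g : Ω → γ} (hfg : IndepFun f g μ) (hf : Measurable f)
    (hg : Measurable g) {E C W : Set Ω} (hE : MeasurableSet[mβ.comap f] E)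
    (hC : MeasurableSet[mγ.comap g] C) (hCW : MeasurableSet[mγ.comap g] (C ∩ W))
    (hEC : μ (E ∩ C) ≠ 0) :
    μ[W | E ∩ C] = μ[W | C] := by
  have hμE : μ E ≠ 0 := fun h => hEC (measure_mono_null Set.inter_subset_left h)
  rw [cond_apply (hf.comap_le _ hE |>.inter (hg.comap_le _ hC)), cond_apply (hg.comap_le _ hC),
    Set.inter_assoc, hfg.meas_inter hE hCW, hfg.meas_inter hE hC,
    ENNReal.mul_inv (Or.inr (measure_ne_top _ _)) (Or.inl (measure_ne_top _ _)),
    mul_mul_mul_comm, ENNReal.inv_mul_cancel hμE (measure_ne_top _ _), one_mul]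

variable [IsFiniteMeasure μ] {p : Ω → Prop} {v : Ω → ℝ} {a b : ℝ}

theorem measureReal_and_le_eq_add (hp : MeasurableSet {ω | p ω}) (hv : Measurable v)
    (hab : a ≤ b) (ha : μ {ω | v ω = a} = 0) :
    μ.real {ω | p ω ∧ v ω ≤ b} =
      μ.real {ω | p ω ∧ v ω ≤ a} + μ.real {ω | p ω ∧ a ≤ v ω ∧ v ω ≤ b} := by
  have hsplit : {ω | p ω ∧ v ω ≤ b} =
      {ω | p ω ∧ v ω ≤ a} ∪ ({ω | p ω ∧ a ≤ v ω ∧ v ω ≤ b} \ {ω | v ω = a}) := by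
    ext ω
    simp only [Set.mem_union, Set.mem_sdiff, Set.mem_ofPred_eq]
    constructor
    · rintro ⟨hpω, hb⟩
      rcases le_or_gt (v ω) a with h | h
      · exact Or.inl ⟨hpω, h⟩
      · exact Or.inr ⟨⟨hpω, h.le, hb⟩, h.ne'⟩
    · rintro (⟨hpω, h⟩ | ⟨⟨hpω, -, hb⟩, -⟩)
      exacts [⟨hpω, h.trans hab⟩, ⟨hpω, hb⟩]
  have hdisj : Disjoint {ω | p ω ∧ v ω ≤ a} ({ω | p ω ∧ a ≤ v ω ∧ v ω ≤ b} \ {ω | v ω = a}) :=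
    Set.disjoint_left.2 fun ω h1 h2 => h2.2 (le_antisymm h1.2 h2.1.2.1)
  rw [hsplit, measureReal_union hdisj, measureReal_sdiff_null (by simp [Measure.real, ha])]
  exact (hp.inter ((measurableSet_le measurable_const hv).inter
    (measurableSet_le hv measurable_const))).diff (measurableSet_eq_fun hv measurable_const)

theorem measureReal_and_not_le_eq_add (hp : MeasurableSet {ω | p ω}) (hv : Measurable v)
    (hab : a ≤ b) (ha : μ {ω | v ω = a} = 0) :
    μ.real {ω | p ω ∧ ¬ v ω ≤ a} =
      μ.real {ω | p ω ∧ ¬ v ω ≤ b} + μ.real {ω | p ω ∧ a ≤ v ω ∧ v ω ≤ b} := by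
  have hcompl (c : ℝ) :
      μ.real {ω | p ω ∧ v ω ≤ c} + μ.real {ω | p ω ∧ ¬ v ω ≤ c} = μ.real {ω | p ω} :=
    measureReal_inter_add_sdiff (measurableSet_le hv measurable_const)
  linarith [hcompl a, hcompl b, measureReal_and_le_eq_add hp hv hab ha]

end ProbabilityTheory

theorem measurable_decide {α : Type*} {m : MeasurableSpace α} {p : α → Prop}
    [DecidablePred p] (hp : MeasurableSet {a | p a}) : Measurable fun a => decide (p a) :=
  measurable_to_bool (by simpa only [Set.preimage, Set.mem_singleton_iff, decide_eq_true_eq])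

namespace DynModel

variable {T : ℕ} {Ω : Type} [MeasurableSpace Ω] (M : DynModel T Ω)

theorem measurable_ydet {α : Type*} {m : MeasurableSpace α} {u : α → ℕ → ℝ} (d : ℕ → Bool)
    (x : ℕ → ℝ) {s : ℕ} (hu : ∀ r ≤ s, Measurable fun a => u a r) :
    Measurable fun a => M.ydet (u a) d x s := by
  induction s using Nat.strong_induction_on with
  | _ s ih =>
    have hpast : Measurable fun a => fun r : Fin s => M.ydet (u a) d x r :=
      measurable_pi_lambda _ fun r => ih r r.2 fun q hq => hu q (hq.trans r.2.le)
    have hμ : Measurable fun a => M.μf s (fun r : Fin s => M.ydet (u a) d x r)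
        (fun r : Fin (s + 1) => d r) (x s) :=
      (Measurable.of_discrete (f := fun y => M.μf s y (fun r : Fin (s + 1) => d r) (x s))).comp
        hpast
    simp_rw [ydet.eq_1 M _ d x s]
    exact measurable_decide (measurableSet_le (hu s le_rfl) hμ)

theorem measurable_πf_ydet {α : Type*} {m : MeasurableSpace α} {u : α → ℕ → ℝ} (d : ℕ → Bool)
    (x : ℕ → ℝ) {s : ℕ} (dpast : Fin s → Bool) (z : ℝ) (hu : ∀ r < s, Measurable fun a => u a r) :
    Measurable fun a => M.πf s (fun r : Fin s => M.ydet (u a) d x r) dpast z :=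
  (Measurable.of_discrete (f := fun y => M.πf s y dpast z)).comp <|
    measurable_pi_lambda _ fun r : Fin s => M.measurable_ydet d x fun q hq => hu q (hq.trans_lt r.2)

theorem Y_eq_ydet {d : ℕ → Bool} {x : ℕ → ℝ} {ω : Ω} {s : ℕ} (hs : s < T)
    (hD : ∀ r ≤ s, M.D r ω = d r) (hX : ∀ r ≤ s, M.X r ω = x r) :
    M.Y s ω = M.ydet (fun q => M.U q (d q) ω) d x s := by
  induction s using Nat.strong_induction_on with
  | _ s ih =>
    have hY : (fun r : Fin s => M.Y r ω) = fun r : Fin s => M.ydet (fun q => M.U q (d q) ω) d x r :=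
      funext fun r => ih r r.2 (r.2.trans hs) (fun q hq => hD q (by omega))
        (fun q hq => hX q (by omega))
    have hDs : (fun r : Fin (s + 1) => M.D r ω) = fun r : Fin (s + 1) => d r :=
      funext fun r => hD r (Nat.lt_succ_iff.mp r.2)
    rw [M.eqY s hs, ydet, hD s le_rfl, hY, hDs, hX s le_rfl]

theorem D_eq_decide_ydet {d : ℕ → Bool} {x : ℕ → ℝ} {ω : Ω} {s : ℕ} (hs : s < T)
    (hD : ∀ r < s, M.D r ω = d r) (hX : ∀ r < s, M.X r ω = x r) :
    M.D s ω = decide (M.V s ω ≤ M.πf s (fun r : Fin s => M.ydet (fun q => M.U q (d q) ω) d x r)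
      (fun r : Fin s => d r) (M.Z s ω)) := by
  have hY : (fun r : Fin s => M.Y r ω) = fun r : Fin s => M.ydet (fun q => M.U q (d q) ω) d x r :=
    funext fun r => M.Y_eq_ydet (r.2.trans hs) (fun q hq => hD q (by omega))
      (fun q hq => hX q (by omega))
  rw [M.eqD s hs, hY, funext fun r : Fin s => hD r r.2]

def exoHistEvent (t : ℕ) (zh xh : Fin t → ℝ) : Set Ω :=
  {ω | ∀ s : Fin t, M.Z s ω = zh s ∧ M.X s ω = xh s}

/-- The paper's `{V^t ∈ 𝒱^t(d^t, U^{t−1}(d^{t−1}); z^t, x^{t−1}), U^t(d^t) ∈ 𝒰^t(d^t, y^t; x^t)}`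
for the first `t` periods, with the regime `dh` and the path `xh` extended to `de` and `xe`. -/
def unobsHistEvent (t : ℕ) (zh : Fin t → ℝ) (dh yh : Fin t → Bool) (de : ℕ → Bool)
    (xe : ℕ → ℝ) : Set Ω :=
  {ω | (∀ s : Fin t, M.ydet (fun r => M.U r (de r) ω) de xe s = yh s) ∧
    (∀ s : Fin t, dh s = decide (M.V s ω ≤
      M.πf s (fun r : Fin (s : ℕ) => M.ydet (fun r' => M.U r' (de r') ω) de xe r)
        (fun r : Fin (s : ℕ) => dh ⟨r, lt_trans r.isLt s.isLt⟩) (zh s)))}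

variable {t : ℕ} {zh xh : Fin t → ℝ} {dh yh : Fin t → Bool} {de : ℕ → Bool} {xe : ℕ → ℝ}

theorem mem_unobsHistEvent_iff (ht : t ≤ T) (hde : ∀ s : Fin t, de s = dh s)
    (hxe : ∀ s : Fin t, xe s = xh s) {ω : Ω} (hω : ω ∈ M.exoHistEvent t zh xh) :
    ω ∈ M.unobsHistEvent t zh dh yh de xe ↔ ∀ s : Fin t, M.D s ω = dh s ∧ M.Y s ω = yh s := by
  have hX (r : ℕ) (hr : r < t) : M.X r ω = xe r := (hω ⟨r, hr⟩).2.trans (hxe ⟨r, hr⟩).symm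
  have hDs (s : Fin t) (hD : ∀ r < (s : ℕ), M.D r ω = de r) :
      M.D s ω = decide (M.V s ω ≤
        M.πf s (fun r : Fin (s : ℕ) => M.ydet (fun r' => M.U r' (de r') ω) de xe r)
          (fun r : Fin (s : ℕ) => dh ⟨r, lt_trans r.isLt s.isLt⟩) (zh s)) := by
    rw [M.D_eq_decide_ydet (s.2.trans_le ht) hD fun r hr => hX r (hr.trans s.2), (hω s).1]
    congr 3
    exact funext fun r => hde ⟨r, r.2.trans s.2⟩
  have hYs (s : Fin t) (hD : ∀ r < t, M.D r ω = de r) :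
      M.Y s ω = M.ydet (fun r => M.U r (de r) ω) de xe s :=
    M.Y_eq_ydet (s.2.trans_le ht) (fun r hr => hD r (by omega)) fun r hr => hX r (by omega)
  constructor
  · rintro ⟨hy, hd⟩
    have hD (s : ℕ) : s < t → M.D s ω = de s := by
      induction s using Nat.strong_induction_on with
      | _ s ih =>
        intro hs
        rw [hDs ⟨s, hs⟩ fun r hr => ih r hr (hr.trans hs), ← hd ⟨s, hs⟩, hde ⟨s, hs⟩]
    exact fun s => ⟨(hD s s.2).trans (hde s), (hYs s hD).trans (hy s)⟩
  · intro h
    have hD (r : ℕ) (hr : r < t) : M.D r ω = de r := (h ⟨r, hr⟩).1.trans (hde ⟨r, hr⟩).symm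
    exact ⟨fun s => (hYs s hD).symm.trans (h s).2,
      fun s => (h s).1.symm.trans (hDs s fun r hr => hD r (hr.trans s.2))⟩

theorem fullHistEvent_eq (ht : t ≤ T) (hde : ∀ s : Fin t, de s = dh s)
    (hxe : ∀ s : Fin t, xe s = xh s) (z x : ℝ) :
    fullHistEvent M t zh xh dh yh z x =
      (M.exoHistEvent t zh xh ∩ {ω | M.Z t ω = z ∧ M.X t ω = x}) ∩
        M.unobsHistEvent t zh dh yh de xe := by
  ext ω
  constructor
  · rintro ⟨h, hz, hx⟩
    have hω : ω ∈ M.exoHistEvent t zh xh := fun s => ⟨(h s).1, (h s).2.1⟩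
    exact ⟨⟨hω, hz, hx⟩, (M.mem_unobsHistEvent_iff ht hde hxe hω).2 fun s => (h s).2.2⟩
  · rintro ⟨⟨hω, hz, hx⟩, hu⟩
    have hDY := (M.mem_unobsHistEvent_iff ht hde hxe hω).1 hu
    exact ⟨fun s => ⟨(hω s).1, (hω s).2, hDY s⟩, hz, hx⟩

theorem fullHistEvent_inter_eq (ht : t < T) (z x : ℝ) (b : Bool) :
    fullHistEvent M t zh xh dh yh z x ∩ {ω | M.Y t ω = true ∧ M.D t ω = b} =
      fullHistEvent M t zh xh dh yh z x ∩ {ω | M.U t b ω ≤ M.μf t yh (Fin.snoc dh b) x ∧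
        decide (M.V t ω ≤ M.πf t yh dh z) = b} := by
  ext ω
  simp only [Set.mem_inter_iff, Set.mem_ofPred_eq, and_congr_right_iff]
  rintro ⟨h, hz, hx⟩
  have hYpast : (fun s : Fin t => M.Y s ω) = yh := funext fun s => (h s).2.2.2
  have hDpast : (fun s : Fin (t + 1) => M.D s ω) = Fin.snoc dh (M.D t ω) :=
    (Fin.snoc_init_self _).symm.trans (congrArg₂ _ (funext fun s => (h s).2.2.1) rfl)
  have hDt : M.D t ω = decide (M.V t ω ≤ M.πf t yh dh z) := by
    rw [M.eqD t ht, hYpast, funext fun s : Fin t => (h s).2.2.1, hz]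
  rw [M.eqY t ht, hYpast, hDpast, hx, ← hDt]
  constructor
  · rintro ⟨hY, rfl⟩
    exact ⟨of_decide_eq_true hY, rfl⟩
  · rintro ⟨hU, rfl⟩
    exact ⟨decide_eq_true hU, rfl⟩

def exo (ω : Ω) : (Fin T → ℝ) × (Fin T → ℝ) := (fun s => M.Z s ω, fun s => M.X s ω)

def unobs (d : ℕ → Bool) (ω : Ω) : (Fin T → ℝ) × (Fin T → ℝ) :=
  (fun s => M.U s (d s) ω, fun s => M.V s ω)

theorem measurable_exo : Measurable M.exo :=
  (measurable_pi_lambda _ fun s : Fin T => M.measZ s).prodMk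
    (measurable_pi_lambda _ fun s : Fin T => M.measX s)

theorem measurable_unobs (d : ℕ → Bool) : Measurable (M.unobs d) :=
  (measurable_pi_lambda _ fun s : Fin T => M.measU s (d s)).prodMk
    (measurable_pi_lambda _ fun s : Fin T => M.measV s)

theorem measurable_Z_comap_exo {s : ℕ} (hs : s < T) :
    Measurable[MeasurableSpace.comap M.exo inferInstance] (M.Z s) :=
  ((measurable_pi_apply (⟨s, hs⟩ : Fin T)).comp measurable_fst).comp (comap_measurable M.exo)

theorem measurable_X_comap_exo {s : ℕ} (hs : s < T) :
    Measurable[MeasurableSpace.comap M.exo inferInstance] (M.X s) :=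
  ((measurable_pi_apply (⟨s, hs⟩ : Fin T)).comp measurable_snd).comp (comap_measurable M.exo)

theorem measurable_U_comap_unobs (d : ℕ → Bool) {s : ℕ} (hs : s < T) :
    Measurable[MeasurableSpace.comap (M.unobs d) inferInstance] (M.U s (d s)) :=
  ((measurable_pi_apply (⟨s, hs⟩ : Fin T)).comp measurable_fst).comp
    (comap_measurable (M.unobs d))

theorem measurable_U_comap_unobs_update (de : ℕ → Bool) (t : ℕ) (b : Bool) (ht : t < T) :
    Measurable[MeasurableSpace.comap (M.unobs (Function.update de t b)) inferInstance]
      (M.U t b) := by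
  simpa using M.measurable_U_comap_unobs (Function.update de t b) ht

theorem measurable_V_comap_unobs (d : ℕ → Bool) {s : ℕ} (hs : s < T) :
    Measurable[MeasurableSpace.comap (M.unobs d) inferInstance] (M.V s) :=
  ((measurable_pi_apply (⟨s, hs⟩ : Fin T)).comp measurable_snd).comp
    (comap_measurable (M.unobs d))

theorem measurableSet_exoHistEvent (ht : t ≤ T) :
    MeasurableSet[MeasurableSpace.comap M.exo inferInstance] (M.exoHistEvent t zh xh) := by
  rw [exoHistEvent, Set.ofPred_forall]
  exact MeasurableSet.iInter fun s =>
    (M.measurable_Z_comap_exo (s.2.trans_le ht) (measurableSet_singleton _)).inter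
      (M.measurable_X_comap_exo (s.2.trans_le ht) (measurableSet_singleton _))

theorem measurableSet_unobsHistEvent {d : ℕ → Bool} (hd : ∀ r < t, d r = de r) (ht : t ≤ T) :
    MeasurableSet[MeasurableSpace.comap (M.unobs d) inferInstance]
      (M.unobsHistEvent t zh dh yh de xe) := by
  have hy (s : ℕ) (hs : s < t) : Measurable[MeasurableSpace.comap (M.unobs d) inferInstance]
      fun ω => M.ydet (fun r => M.U r (de r) ω) de xe s :=
    M.measurable_ydet de xe fun r hr =>
      hd r (by omega) ▸ M.measurable_U_comap_unobs d (by omega)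
  have hdec (s : Fin t) : MeasurableSet[MeasurableSpace.comap (M.unobs d) inferInstance]
      {ω | dh s = decide (M.V s ω ≤
        M.πf s (fun r : Fin (s : ℕ) => M.ydet (fun r' => M.U r' (de r') ω) de xe r)
          (fun r : Fin (s : ℕ) => dh ⟨r, lt_trans r.isLt s.isLt⟩) (zh s))} := by
    simp_rw [eq_comm (a := dh s)]
    refine measurable_decide (measurableSet_le (M.measurable_V_comap_unobs d (by omega))
      (M.measurable_πf_ydet de xe _ _ fun r hr => ?_)) (measurableSet_singleton _)
    exact hd r (by omega) ▸ M.measurable_U_comap_unobs d (by omega)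
  rw [unobsHistEvent, Set.ofPred_and, Set.ofPred_forall, Set.ofPred_forall]
  exact (MeasurableSet.iInter fun s : Fin t => hy s s.2 (measurableSet_singleton _)).inter
    (MeasurableSet.iInter hdec)

theorem measure_V_eq_zero (hC : AssmC M) {t : ℕ} (ht : t < T) (c : ℝ) :
    M.P {ω | M.V t ω = c} = 0 := by
  obtain ⟨f, -, hmap : M.P.map (M.unobs fun _ => false) = volume.withDensity f⟩ :=
    hC fun _ => false
  have hS : MeasurableSet {q : (Fin T → ℝ) × (Fin T → ℝ) | q.2 ⟨t, ht⟩ = c} :=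
    measurableSet_eq_fun (measurable_pi_apply _ |>.comp measurable_snd) measurable_const
  have hvol : volume {q : (Fin T → ℝ) × (Fin T → ℝ) | q.2 ⟨t, ht⟩ = c} = 0 := by
    refine measure_mono_null
      (t := Set.univ ×ˢ (Function.eval (β := fun _ : Fin T => ℝ) ⟨t, ht⟩ ⁻¹' {c}))
      (fun q hq => ⟨trivial, hq⟩) ?_
    rw [Measure.volume_eq_prod, Measure.prod_prod, volume_pi,
      Measure.pi_eval_preimage_null _ (measure_singleton c), mul_zero]
  calc M.P {ω | M.V t ω = c}
      = M.P.map (M.unobs fun _ => false) {q | q.2 ⟨t, ht⟩ = c} :=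
        (Measure.map_apply (M.measurable_unobs _) hS).symm
    _ = 0 := by rw [hmap]; exact withDensity_absolutelyContinuous _ _ hvol

-- `update de t b` agrees with `de` before `t`, so the history event and every event in
-- `(U_t(b), V_t)` are functions of `unobs (update de t b)`, which SX makes independent of `exo`.
theorem cond_inter_unobsHistEvent (hSX : AssmSX M) (ht : t < T) {E W : Set Ω} {b : Bool}
    (hE : MeasurableSet[MeasurableSpace.comap M.exo inferInstance] E)
    (hW : MeasurableSet[MeasurableSpace.comap (M.unobs (Function.update de t b)) inferInstance] W)
    (hpos : M.P (E ∩ M.unobsHistEvent t zh dh yh de xe) ≠ 0) :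
    M.P[W | E ∩ M.unobsHistEvent t zh dh yh de xe] =
      M.P[W | M.unobsHistEvent t zh dh yh de xe] := by
  have := M.probP
  have hC := M.measurableSet_unobsHistEvent (zh := zh) (dh := dh) (yh := yh) (xe := xe)
    (fun r hr => Function.update_of_ne hr.ne b de) ht.le
  exact (hSX _).cond_inter_eq_cond M.measurable_exo (M.measurable_unobs _) hE hC (hC.inter hW)
    hpos

theorem cond_exoHistEvent_inter_unobsHistEvent (hSX : AssmSX M) (ht : t < T)
    (hpos : M.P (M.exoHistEvent t zh xh ∩ M.unobsHistEvent t zh dh yh de xe) ≠ 0)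
    {b : Bool} {c a a' : ℝ} :
    M.P[{ω | M.U t b ω ≤ c ∧ a ≤ M.V t ω ∧ M.V t ω ≤ a'} |
        M.exoHistEvent t zh xh ∩ M.unobsHistEvent t zh dh yh de xe] =
      M.P[{ω | M.U t b ω ≤ c ∧ a ≤ M.V t ω ∧ M.V t ω ≤ a'} |
        M.unobsHistEvent t zh dh yh de xe] :=
  M.cond_inter_unobsHistEvent hSX ht (M.measurableSet_exoHistEvent ht.le)
    ((measurableSet_le (M.measurable_U_comap_unobs_update de t b ht) measurable_const).inter
      ((measurableSet_le measurable_const (M.measurable_V_comap_unobs _ ht)).inter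
        (measurableSet_le (M.measurable_V_comap_unobs _ ht) measurable_const))) hpos

theorem cond_fullHistEvent (hSX : AssmSX M) (ht : t < T) (hde : ∀ s : Fin t, de s = dh s)
    (hxe : ∀ s : Fin t, xe s = xh s) {z x : ℝ}
    (hpos : M.P (fullHistEvent M t zh xh dh yh z x) ≠ 0) (b : Bool) :
    M.P[{ω | M.Y t ω = true ∧ M.D t ω = b} | fullHistEvent M t zh xh dh yh z x] =
      M.P[{ω | M.U t b ω ≤ M.μf t yh (Fin.snoc dh b) x ∧ decide (M.V t ω ≤ M.πf t yh dh z) = b} |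
        M.unobsHistEvent t zh dh yh de xe] := by
  have hE : MeasurableSet[MeasurableSpace.comap M.exo inferInstance]
      (M.exoHistEvent t zh xh ∩ {ω | M.Z t ω = z ∧ M.X t ω = x}) :=
    (M.measurableSet_exoHistEvent ht.le).inter
      ((M.measurable_Z_comap_exo ht (measurableSet_singleton z)).inter
        (M.measurable_X_comap_exo ht (measurableSet_singleton x)))
  have hC : MeasurableSet (M.unobsHistEvent t zh dh yh de xe) :=
    (M.measurable_unobs de).comap_le _ (M.measurableSet_unobsHistEvent (fun _ _ => rfl) ht.le)
  have hfull := M.fullHistEvent_eq (zh := zh) (yh := yh) ht.le hde hxe z x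
  rw [cond_congr_of_inter_eq (hfull ▸ (M.measurable_exo.comap_le _ hE).inter hC)
    (M.fullHistEvent_inter_eq ht z x b), hfull]
  rw [hfull] at hpos
  refine M.cond_inter_unobsHistEvent hSX ht (b := b) hE ?_ hpos
  exact (measurableSet_le (M.measurable_U_comap_unobs_update de t b ht) measurable_const).inter
    (measurable_decide (measurableSet_le (M.measurable_V_comap_unobs _ ht) measurable_const)
      (measurableSet_singleton b))

end DynModel

theorem statement4_general {T : ℕ} {Ω : Type} [MeasurableSpace Ω]
    (M : DynModel T Ω) (hC : AssmC M) (hSX : AssmSX M)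
    (t : ℕ) (ht : t < T)
    (zh xh : Fin t → ℝ) (dh yh : Fin t → Bool) (zt ztt xt xtt : ℝ)
    -- extensions of the fixed histories to full paths (only coordinates `< t` are ever used)
    (de : ℕ → Bool) (hde : ∀ s : Fin t, de s = dh s)
    (xe : ℕ → ℝ) (hxe : ∀ s : Fin t, xe s = xh s)
    -- `π_t` and `π̃_t`, with `π̃_t ≤ π_t`
    (hππ : M.πf t yh dh ztt ≤ M.πf t yh dh zt)
    -- positive probability of all conditioning events
    (hpos1 : 0 < M.P (fullHistEvent M t zh xh dh yh zt xt))
    (hpos2 : 0 < M.P (fullHistEvent M t zh xh dh yh zt xtt))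
    (hpos3 : 0 < M.P (fullHistEvent M t zh xh dh yh ztt xt))
    (hpos4 : 0 < M.P (fullHistEvent M t zh xh dh yh ztt xtt))
    (hposA : 0 < M.P
      {ω | (∀ s : Fin t, M.Z s ω = zh s ∧ M.X s ω = xh s) ∧
        (∀ s : Fin t, M.ydet (fun r => M.U r (de r) ω) de xe s = yh s) ∧
        (∀ s : Fin t, dh s = decide (M.V s ω ≤
          M.πf s (fun r : Fin (s : ℕ) => M.ydet (fun r' => M.U r' (de r') ω) de xe r)
            (fun r : Fin (s : ℕ) => dh ⟨r, lt_trans r.isLt s.isLt⟩) (zh s)))}) :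
    (ProbabilityTheory.cond M.P (fullHistEvent M t zh xh dh yh zt xt)
        {ω | M.Y t ω = true ∧ M.D t ω = true}).toReal
      + (ProbabilityTheory.cond M.P (fullHistEvent M t zh xh dh yh zt xtt)
        {ω | M.Y t ω = true ∧ M.D t ω = false}).toReal
      - (ProbabilityTheory.cond M.P (fullHistEvent M t zh xh dh yh ztt xt)
        {ω | M.Y t ω = true ∧ M.D t ω = true}).toReal
      - (ProbabilityTheory.cond M.P (fullHistEvent M t zh xh dh yh ztt xtt)
        {ω | M.Y t ω = true ∧ M.D t ω = false}).toReal
    =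
    (ProbabilityTheory.cond M.P
      {ω | (∀ s : Fin t, M.Z s ω = zh s ∧ M.X s ω = xh s) ∧
        (∀ s : Fin t, M.ydet (fun r => M.U r (de r) ω) de xe s = yh s) ∧
        (∀ s : Fin t, dh s = decide (M.V s ω ≤
          M.πf s (fun r : Fin (s : ℕ) => M.ydet (fun r' => M.U r' (de r') ω) de xe r)
            (fun r : Fin (s : ℕ) => dh ⟨r, lt_trans r.isLt s.isLt⟩) (zh s)))}
      {ω | M.U t true ω ≤ M.μf t yh (Fin.snoc dh true) xt ∧
        M.πf t yh dh ztt ≤ M.V t ω ∧ M.V t ω ≤ M.πf t yh dh zt}).toReal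
    -
    (ProbabilityTheory.cond M.P
      {ω | (∀ s : Fin t, M.Z s ω = zh s ∧ M.X s ω = xh s) ∧
        (∀ s : Fin t, M.ydet (fun r => M.U r (de r) ω) de xe s = yh s) ∧
        (∀ s : Fin t, dh s = decide (M.V s ω ≤
          M.πf s (fun r : Fin (s : ℕ) => M.ydet (fun r' => M.U r' (de r') ω) de xe r)
            (fun r : Fin (s : ℕ) => dh ⟨r, lt_trans r.isLt s.isLt⟩) (zh s)))}
      {ω | M.U t false ω ≤ M.μf t yh (Fin.snoc dh false) xtt ∧
        M.πf t yh dh ztt ≤ M.V t ω ∧ M.V t ω ≤ M.πf t yh dh zt}).toReal := by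
  have := M.probP
  rw [M.cond_fullHistEvent hSX ht hde hxe hpos1.ne', M.cond_fullHistEvent hSX ht hde hxe hpos2.ne',
    M.cond_fullHistEvent hSX ht hde hxe hpos3.ne', M.cond_fullHistEvent hSX ht hde hxe hpos4.ne']
  change _ = (M.P[_ | M.exoHistEvent t zh xh ∩ M.unobsHistEvent t zh dh yh de xe]).toReal -
    (M.P[_ | M.exoHistEvent t zh xh ∩ M.unobsHistEvent t zh dh yh de xe]).toReal
  rw [M.cond_exoHistEvent_inter_unobsHistEvent hSX ht hposA.ne',
    M.cond_exoHistEvent_inter_unobsHistEvent hSX ht hposA.ne']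
  have hnull : M.P[{ω | M.V t ω = M.πf t yh dh ztt} | M.unobsHistEvent t zh dh yh de xe] = 0 :=
    cond_absolutelyContinuous (M.measure_V_eq_zero hC ht _)
  have hU (b : Bool) (c : ℝ) : MeasurableSet {ω | M.U t b ω ≤ c} :=
    measurableSet_le (M.measU t b) measurable_const
  simp only [decide_eq_true_eq, decide_eq_false_iff_not, ← measureReal_def]
  linarith [measureReal_and_le_eq_add (hU true (M.μf t yh (Fin.snoc dh true) xt)) (M.measV t)
      hππ hnull,
    measureReal_and_not_le_eq_add (hU false (M.μf t yh (Fin.snoc dh false) xtt)) (M.measV t)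
      hππ hnull]

/-- decomposition of `h_t` as a difference of two conditional probabilities on the
event `A` defined by the `U`- and `V`-sets. -/
theorem statement4 {T : ℕ} {Ω : Type} [MeasurableSpace Ω]
    (M : DynModel T Ω) (hC : AssmC M) (hSX : AssmSX M)
    (t : ℕ) (ht1 : 1 ≤ t) (ht : t < T)
    (zh xh : Fin t → ℝ) (dh yh : Fin t → Bool) (zt ztt xt xtt : ℝ)
    -- extensions of the fixed histories to full paths (only coordinates `< t` are ever used)
    (de : ℕ → Bool) (hde : ∀ s : Fin t, de s = dh s)
    (xe : ℕ → ℝ) (hxe : ∀ s : Fin t, xe s = xh s)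
    -- `π_t` and `π̃_t`, with `π̃_t ≤ π_t`
    (hππ : M.πf t yh dh ztt ≤ M.πf t yh dh zt)
    -- positive probability of all conditioning events
    (hpos1 : 0 < M.P (fullHistEvent M t zh xh dh yh zt xt))
    (hpos2 : 0 < M.P (fullHistEvent M t zh xh dh yh zt xtt))
    (hpos3 : 0 < M.P (fullHistEvent M t zh xh dh yh ztt xt))
    (hpos4 : 0 < M.P (fullHistEvent M t zh xh dh yh ztt xtt))
    (hposA : 0 < M.P
      {ω | (∀ s : Fin t, M.Z s ω = zh s ∧ M.X s ω = xh s) ∧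
        (∀ s : Fin t, M.ydet (fun r => M.U r (de r) ω) de xe s = yh s) ∧
        (∀ s : Fin t, dh s = decide (M.V s ω ≤
          M.πf s (fun r : Fin (s : ℕ) => M.ydet (fun r' => M.U r' (de r') ω) de xe r)
            (fun r : Fin (s : ℕ) => dh ⟨r, lt_trans r.isLt s.isLt⟩) (zh s)))}) :
    (ProbabilityTheory.cond M.P (fullHistEvent M t zh xh dh yh zt xt)
        {ω | M.Y t ω = true ∧ M.D t ω = true}).toReal
      + (ProbabilityTheory.cond M.P (fullHistEvent M t zh xh dh yh zt xtt)
        {ω | M.Y t ω = true ∧ M.D t ω = false}).toReal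
      - (ProbabilityTheory.cond M.P (fullHistEvent M t zh xh dh yh ztt xt)
        {ω | M.Y t ω = true ∧ M.D t ω = true}).toReal
      - (ProbabilityTheory.cond M.P (fullHistEvent M t zh xh dh yh ztt xtt)
        {ω | M.Y t ω = true ∧ M.D t ω = false}).toReal
    =
    (ProbabilityTheory.cond M.P
      {ω | (∀ s : Fin t, M.Z s ω = zh s ∧ M.X s ω = xh s) ∧
        (∀ s : Fin t, M.ydet (fun r => M.U r (de r) ω) de xe s = yh s) ∧
        (∀ s : Fin t, dh s = decide (M.V s ω ≤
          M.πf s (fun r : Fin (s : ℕ) => M.ydet (fun r' => M.U r' (de r') ω) de xe r)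
            (fun r : Fin (s : ℕ) => dh ⟨r, lt_trans r.isLt s.isLt⟩) (zh s)))}
      {ω | M.U t true ω ≤ M.μf t yh (Fin.snoc dh true) xt ∧
        M.πf t yh dh ztt ≤ M.V t ω ∧ M.V t ω ≤ M.πf t yh dh zt}).toReal
    -
    (ProbabilityTheory.cond M.P
      {ω | (∀ s : Fin t, M.Z s ω = zh s ∧ M.X s ω = xh s) ∧
        (∀ s : Fin t, M.ydet (fun r => M.U r (de r) ω) de xe s = yh s) ∧
        (∀ s : Fin t, dh s = decide (M.V s ω ≤
          M.πf s (fun r : Fin (s : ℕ) => M.ydet (fun r' => M.U r' (de r') ω) de xe r)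
            (fun r : Fin (s : ℕ) => dh ⟨r, lt_trans r.isLt s.isLt⟩) (zh s)))}
      {ω | M.U t false ω ≤ M.μf t yh (Fin.snoc dh false) xtt ∧
        M.πf t yh dh ztt ≤ M.V t ω ∧ M.V t ω ≤ M.πf t yh dh zt}).toReal :=
  statement4_general M hC hSX t ht zh xh dh yh zt ztt xt xtt de hde xe hxe hππ hpos1 hpos2 hpos3
    hpos4 hposA
end
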